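/- arXiv:2401.15667 — 2 statements merged into one kernel-verified Lean document; each statement's English description precedes it below -/
import Mathlib

section
/- Let $f:X\to Y$ be a continuous map between convenient spaces. Suppose $Y$ has an open cover $\mathcal{U}=\{U_i\}_{i=1}^{n+1}$ such that (1) for each $i$, the restriction $f|_{f^{-1}(U_i)}:f^{-1}(U_i)\to U_i$ admits a continuous section, and (2) $Y$ admits a partition of unity subordinate to $\mathcal{U}$. Then $\mathrm{asecat}(f)\leq n$. -/
open scoped unitInterval

noncomputable section

universe u v


/-- Presentations of probability measures with finite support: a tuple of points
together with a point of the standard simplex. This is the disjoint union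
`⨆ₙ Xⁿ × Δ^{n-1}`. -/
def PreProb (X : Type u) [TopologicalSpace X] : Type u :=
  Σ n : ℕ, (Fin (n + 1) → X) × (stdSimplex ℝ (Fin (n + 1)))

instance (X : Type u) [TopologicalSpace X] : TopologicalSpace (PreProb X) :=
  inferInstanceAs (TopologicalSpace (Σ n : ℕ, (Fin (n + 1) → X) × (stdSimplex ℝ (Fin (n + 1)))))

/-- The space of probability measures with finite support, encoded as finitely
supported real-valued functions that are nonnegative and sum to `1`.  Its topology
(defined below) is coinduced from the space of presentations, i.e. it is the quotient
topology of the paper. -/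
def FinProb (X : Type u) [TopologicalSpace X] : Type u :=
  { w : X →₀ ℝ // (∀ x, 0 ≤ w x) ∧ w.sum (fun _ t => t) = 1 }

/-- The quotient map from presentations to finitely supported probability measures,
`(x₁,…,xₙ,t₁,…,tₙ) ↦ ∑ tᵢ δ_{xᵢ}`. -/
def PreProb.toFinProb {X : Type u} [TopologicalSpace X] (p : PreProb X) : FinProb X := by
  classical
  refine ⟨∑ i, Finsupp.single (p.2.1 i) ((p.2.2 : Fin (p.1 + 1) → ℝ) i), ?_, ?_⟩
  · intro x
    rw [Finsupp.finset_sum_apply]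
    refine Finset.sum_nonneg fun i _ => ?_
    rw [Finsupp.single_apply]
    split
    · exact p.2.2.2.1 i
    · exact le_refl 0
  · rw [← Finsupp.sum_finset_sum_index (fun _ => rfl) (fun _ _ _ => rfl)]
    simpa [Finsupp.sum_single_index] using p.2.2.2.2

/-- The quotient topology on the space of probability measures with finite support. -/
instance FinProb.instTopologicalSpace (X : Type u) [TopologicalSpace X] :
    TopologicalSpace (FinProb X) :=
  TopologicalSpace.coinduced PreProb.toFinProb inferInstance

/-- The weight that a finitely supported probability measure assigns to a point. -/
def FinProb.weight {X : Type u} [TopologicalSpace X] (μ : FinProb X) (x : X) : ℝ := μ.1 x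

/-- The support of a finitely supported probability measure, as a finset. -/
def FinProb.supp {X : Type u} [TopologicalSpace X] (μ : FinProb X) : Finset X := μ.1.support

/-- `𝒫ₙ(X)`: the subspace of measures supported on at most `n` points. -/
def FinProbLe (X : Type u) [TopologicalSpace X] (n : ℕ) : Set (FinProb X) :=
  { μ | μ.supp.card ≤ n }

/-- Covariant functoriality: the pushforward `f₊ : 𝒫(X) → 𝒫(Y)`,
`∑ tᵢ δ_{xᵢ} ↦ ∑ tᵢ δ_{f xᵢ}`. -/
def FinProb.map {X : Type u} {Y : Type v} [TopologicalSpace X] [TopologicalSpace Y]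
    (f : X → Y) (μ : FinProb X) : FinProb Y := by
  classical
  refine ⟨Finsupp.mapDomain f μ.1, ?_, ?_⟩
  · intro y
    rw [Finsupp.mapDomain, Finsupp.sum_apply]
    refine Finset.sum_nonneg fun x _ => ?_
    dsimp only
    rw [Finsupp.single_apply]
    split
    · exact μ.2.1 x
    · exact le_refl 0
  · rw [Finsupp.sum_mapDomain_index (fun _ => rfl) (fun _ _ _ => rfl)]
    exact μ.2.2

/-- The Dirac measure `δ_x`, i.e. the unit `η` of the monad `𝒫`. -/
def FinProb.dirac {X : Type u} [TopologicalSpace X] (x : X) : FinProb X := by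
  classical
  refine ⟨Finsupp.single x 1, ?_, ?_⟩
  · intro y
    rw [Finsupp.single_apply]
    split
    · exact zero_le_one
    · exact le_refl 0
  · rw [Finsupp.sum_single_index rfl]

/-- `𝒫(f)`: the space of `f`-relative probability measures of finite support, i.e. those
measures on `X` whose support is mapped by `f` to a single point of `Y`. -/
def FinProbRel {X : Type u} {Y : Type v} [TopologicalSpace X] (f : X → Y) :
    Set (FinProb X) :=
  { μ | ∃ y : Y, f '' ↑μ.supp = {y} }

/-- The projection `p : 𝒫(f) → Y`, sending a relative measure to the unique point of
`f(supp μ)`. -/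
def FinProbRel.proj {X : Type u} {Y : Type v} [TopologicalSpace X] (f : X → Y)
    (μ : FinProbRel f) : Y :=
  Exists.choose μ.2

/-- The projection `𝒫(f) → Y` admits a continuous section with image in `𝒫_{n+1}(f)`. -/
def HasAnalogSec {X : Type u} {Y : Type v} [TopologicalSpace X] [TopologicalSpace Y]
    (f : X → Y) (n : ℕ) : Prop :=
  ∃ s : Y → FinProbRel f, Continuous s ∧ (∀ y, FinProbRel.proj f (s y) = y) ∧
    ∀ y, (s y : FinProb X).supp.card ≤ n + 1

/-- The analog sectional category of a map: the least `n` such that the projection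
`𝒫(f) → Y` admits a continuous section with image in `𝒫_{n+1}(f)` (`⊤` if there is
no such `n`). -/
def asecat {X : Type u} {Y : Type v} [TopologicalSpace X] [TopologicalSpace Y]
    (f : X → Y) : ℕ∞ :=
  sInf { n : ℕ∞ | ∃ m : ℕ, (m : ℕ∞) = n ∧ HasAnalogSec f m }

/-- Evaluation of paths at the `r` equally spaced times `i/(r-1)`, `0 ≤ i < r`:
the fibration `π_X^r : X^{[0,1]} → X^r`. -/
def pathEval (X : Type u) [TopologicalSpace X] (r : ℕ) : C(I, X) → (Fin r → X) :=
  fun γ i => γ (Set.projIcc (0 : ℝ) 1 zero_le_one ((i : ℝ) / ((r : ℝ) - 1)))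

/-- The based path space `(X, x₀)^{([0,1],{0})}`. -/
def BasedPaths (X : Type u) [TopologicalSpace X] (x₀ : X) : Type u :=
  { γ : C(I, X) // γ 0 = x₀ }

instance (X : Type u) [TopologicalSpace X] (x₀ : X) : TopologicalSpace (BasedPaths X x₀) :=
  inferInstanceAs (TopologicalSpace { γ : C(I, X) // γ 0 = x₀ })

/-- Evaluation at `1` on the based path space. -/
def basedPathEval (X : Type u) [TopologicalSpace X] (x₀ : X) : BasedPaths X x₀ → X :=
  fun γ => γ.1 1

/-- The analog (LS-)category of a space. -/
def acat (X : Type u) [TopologicalSpace X] (x₀ : X) : ℕ∞ :=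
  asecat (basedPathEval X x₀)

/-- The `r`-th sequential analog topological complexity; `ATC₁ = acat`. -/
def ATC (X : Type u) [TopologicalSpace X] (x₀ : X) (r : ℕ) : ℕ∞ :=
  if r = 1 then acat X x₀ else asecat (pathEval X r)

/-- Classical sectional category data: `f` admits continuous sections over each of
`n + 1` open sets covering `Y`. -/
def HasSecCover {X : Type u} {Y : Type v} [TopologicalSpace X] [TopologicalSpace Y]
    (f : X → Y) (n : ℕ) : Prop :=
  ∃ U : Fin (n + 1) → Set Y, (∀ i, IsOpen (U i)) ∧ (⋃ i, U i) = Set.univ ∧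
    ∀ i, ∃ s : U i → X, Continuous s ∧ ∀ y : U i, f (s y) = (y : Y)

/-- The classical sectional category (Schwarz genus) of a map. -/
def secat {X : Type u} {Y : Type v} [TopologicalSpace X] [TopologicalSpace Y]
    (f : X → Y) : ℕ∞ :=
  sInf { n : ℕ∞ | ∃ m : ℕ, (m : ℕ∞) = n ∧ HasSecCover f m }

/-- The classical Lusternik–Schnirelmann category (normalized: `cat(point) = 0`). -/
def catLS (X : Type u) [TopologicalSpace X] (x₀ : X) : ℕ∞ :=
  secat (basedPathEval X x₀)

/-- The classical `r`-th sequential topological complexity. -/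
def seqTC (X : Type u) [TopologicalSpace X] (x₀ : X) (r : ℕ) : ℕ∞ :=
  if r = 1 then catLS X x₀ else secat (pathEval X r)

/-- The cohomological dimension of a group `G`: the least `n` (possibly `⊤`) such that the
group cohomology `Hᵏ(G; M)` vanishes for all `G`-modules `M` and all `k > n`. -/
def groupCd (G : Type) [Group G] : ℕ∞ :=
  sInf { n : ℕ∞ | ∀ (M : Rep ℤ G) (k : ℕ), n < (k : ℕ∞) → Subsingleton (groupCohomology M k) }

/-- `B` (with basepoint `b`) is a classifying space for the discrete group `G`: a convenient
(compactly generated Hausdorff), path-connected, aspherical space with fundamental group `G`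
and the homotopy type of a CW complex; this characterizes the geometric realization of the
nerve of `G` up to homotopy equivalence. -/
structure IsClassifyingSpace (G : Type) [Group G] (B : Type u) [TopologicalSpace B]
    (b : B) : Prop where
  t2 : T2Space B
  compactlyGenerated : CompactlyGeneratedSpace B
  pathConnected : PathConnectedSpace B
  aspherical : ∀ n : ℕ, 2 ≤ n → Subsingleton (HomotopyGroup (Fin n) B b)
  pi1 : Nonempty (FundamentalGroup B b ≃* G)
  cwType : ∃ K : TopCat.{u}, Nonempty (TopCat.CWComplex K) ∧ Nonempty (ContinuousMap.HomotopyEquiv B K)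

/-- A covering map of degree `k`: every fiber has exactly `k` points. -/
def IsCoveringOfDegree {E : Type u} {X : Type v} [TopologicalSpace E] [TopologicalSpace X]
    (p : E → X) (k : ℕ) : Prop :=
  IsCoveringMap p ∧ ∀ x, (p ⁻¹' {x}).encard = (k : ℕ∞)

/-- Hurewicz fibration: the homotopy lifting property with respect to all spaces. -/
def IsHurewiczFibration {E : Type u} {B : Type v} [TopologicalSpace E] [TopologicalSpace B]
    (p : E → B) : Prop :=
  ∀ (Z : Type max u v) (_ : TopologicalSpace Z) (H : C(Z × I, B)) (h : C(Z, E)),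
    (∀ z, p (h z) = H (z, 0)) →
      ∃ L : C(Z × I, E), (∀ z, L (z, 0) = h z) ∧ ∀ q, p (L q) = H q

/-! The section is `y ↦ ∑ᵢ φᵢ(y) δ_{sᵢ(y)}`: it has at most `n + 1` support points, all in the
fibre over `y`. It is continuous because near any `y₀` it is the image under the quotient map of
a continuous presentation: for `i` with `y₀ ∈ Uᵢ` the section `sᵢ` is defined on a neighbourhood
of `y₀`, and for the other `i` the weight `φᵢ` vanishes on a neighbourhood of `y₀` (as
`tsupport φᵢ ⊆ Uᵢ` is closed), so the point in the `i`-th slot does not matter there. -/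

open Topology

namespace PreProb

variable {X : Type u} [TopologicalSpace X]

theorem supp_toFinProb_subset_range (p : PreProb X) :
    (p.toFinProb.supp : Set X) ⊆ Set.range p.2.1 := by
  intro x hx
  have hx : (∑ i, Finsupp.single (p.2.1 i) ((p.2.2 : Fin (p.1 + 1) → ℝ) i)) x ≠ 0 :=
    Finsupp.mem_support_iff.mp hx
  rw [Finsupp.finsetSum_apply] at hx
  obtain ⟨i, -, hi⟩ := Finset.exists_ne_zero_of_sum_ne_zero hx
  exact ⟨i, (Finsupp.single_apply_ne_zero.mp hi).1.symm⟩

theorem card_supp_toFinProb_le (p : PreProb X) : p.toFinProb.supp.card ≤ p.1 + 1 := by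
  classical
  calc p.toFinProb.supp.card ≤ (Finset.univ.image p.2.1).card :=
        Finset.card_le_card fun x hx => by
          simpa using p.supp_toFinProb_subset_range hx
    _ ≤ p.1 + 1 := Finset.card_image_le.trans (by simp)

theorem toFinProb_congr {n : ℕ} {x x' : Fin (n + 1) → X} {t : stdSimplex ℝ (Fin (n + 1))}
    (h : ∀ i, (t : Fin (n + 1) → ℝ) i ≠ 0 → x i = x' i) :
    toFinProb ⟨n, x, t⟩ = toFinProb ⟨n, x', t⟩ := by
  refine Subtype.ext ?_
  change ∑ i, Finsupp.single (x i) ((t : Fin (n + 1) → ℝ) i)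
    = ∑ i, Finsupp.single (x' i) ((t : Fin (n + 1) → ℝ) i)
  refine Finset.sum_congr rfl fun i _ => ?_
  by_cases ht : (t : Fin (n + 1) → ℝ) i = 0
  · simp only [ht, Finsupp.single_zero]
  · rw [h i ht]

end PreProb

namespace FinProb

variable {X : Type u} {Y : Type v} [TopologicalSpace X] [TopologicalSpace Y]

theorem supp_nonempty (μ : FinProb X) : μ.supp.Nonempty := by
  refine Finset.nonempty_iff_ne_empty.mpr fun h => ?_
  have h1 := μ.2.2
  rw [Finsupp.support_eq_empty.mp h, Finsupp.sum_zero_index] at h1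
  exact zero_ne_one h1

theorem continuous_of_locally_presented {G : Y → FinProb X}
    (h : ∀ y₀, ∃ W ∈ 𝓝 y₀, ∃ F : W → PreProb X,
      Continuous F ∧ ∀ y : W, G y.1 = (F y).toFinProb) :
    Continuous G := by
  refine continuous_iff_continuousAt.mpr fun y₀ => ?_
  obtain ⟨W, hW, F, hF, hGF⟩ := h y₀
  have hGW : ContinuousOn G W := by
    rw [continuousOn_iff_continuous_domRestrict, show W.domRestrict G = PreProb.toFinProb ∘ F from funext hGF]
    exact continuous_coinduced_rng.comp hF
  exact hGW.continuousAt hW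

end FinProb

theorem FinProbRel.proj_eq {X : Type u} {Y : Type v} [TopologicalSpace X] {f : X → Y}
    {μ : FinProb X} (hμ : μ ∈ FinProbRel f) {y : Y} (h : f '' ↑μ.supp = {y}) :
    FinProbRel.proj f ⟨μ, hμ⟩ = y :=
  Set.singleton_eq_singleton_iff.mp ((Exists.choose_spec hμ).symm.trans h)

theorem asecat_le_of_continuous {X : Type u} {Y : Type v} [TopologicalSpace X]
    [TopologicalSpace Y] {f : X → Y} {n : ℕ} {G : Y → FinProb X} (hG : Continuous G)
    (hfG : ∀ y, f '' ↑(G y).supp = {y}) (hcard : ∀ y, (G y).supp.card ≤ n + 1) :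
    asecat f ≤ n :=
  sInf_le ⟨n, rfl, fun y => ⟨G y, y, hfG y⟩, hG.subtype_mk _,
    fun y => FinProbRel.proj_eq _ (hfG y), hcard⟩

section PartitionOfUnity

variable {X : Type u} {Y : Type v} [TopologicalSpace X] [TopologicalSpace Y] {n : ℕ}
  {U : Fin (n + 1) → Set Y} {φ : Fin (n + 1) → Y → ℝ}

theorem exists_mem_of_sum_eq_one (hφsum : ∀ y, ∑ i, φ i y = 1)
    (hφsupp : ∀ i, tsupport (φ i) ⊆ U i) (y : Y) : ∃ i, y ∈ U i := by
  obtain ⟨i, -, hi⟩ := Finset.exists_ne_zero_of_sum_ne_zero ((hφsum y).symm ▸ one_ne_zero)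
  exact ⟨i, hφsupp i (subset_tsupport _ hi)⟩

def partitionWeights (hφnonneg : ∀ i y, 0 ≤ φ i y) (hφsum : ∀ y, ∑ i, φ i y = 1) (y : Y) :
    stdSimplex ℝ (Fin (n + 1)) :=
  ⟨fun i => φ i y, fun i => hφnonneg i y, hφsum y⟩

theorem continuous_partitionWeights (hφcont : ∀ i, Continuous (φ i))
    (hφnonneg : ∀ i y, 0 ≤ φ i y) (hφsum : ∀ y, ∑ i, φ i y = 1) :
    Continuous (partitionWeights hφnonneg hφsum) :=
  (continuous_pi hφcont).subtype_mk _

open Classical in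
/-- Outside `U i` the `i`-th point has weight zero; any local section defined at `y` fills
the slot. -/
def sectionPoints (s : ∀ i, U i → X) (hφsum : ∀ y, ∑ i, φ i y = 1)
    (hφsupp : ∀ i, tsupport (φ i) ⊆ U i) (y : Y) (i : Fin (n + 1)) : X :=
  if h : y ∈ U i then s i ⟨y, h⟩
  else s _ ⟨y, (exists_mem_of_sum_eq_one hφsum hφsupp y).choose_spec⟩

def partitionSection (s : ∀ i, U i → X) (hφnonneg : ∀ i y, 0 ≤ φ i y)
    (hφsum : ∀ y, ∑ i, φ i y = 1) (hφsupp : ∀ i, tsupport (φ i) ⊆ U i) (y : Y) : FinProb X :=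
  PreProb.toFinProb ⟨n, sectionPoints s hφsum hφsupp y, partitionWeights hφnonneg hφsum y⟩

variable (s : ∀ i, U i → X) (hφnonneg : ∀ i y, 0 ≤ φ i y) (hφsum : ∀ y, ∑ i, φ i y = 1)
  (hφsupp : ∀ i, tsupport (φ i) ⊆ U i)

theorem card_supp_partitionSection_le (y : Y) :
    (partitionSection s hφnonneg hφsum hφsupp y).supp.card ≤ n + 1 :=
  PreProb.card_supp_toFinProb_le _

theorem image_supp_partitionSection {f : X → Y} (hfs : ∀ i (y : U i), f (s i y) = y) (y : Y) :
    f '' ↑(partitionSection s hφnonneg hφsum hφsupp y).supp = {y} := by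
  have hpts : ∀ i, f (sectionPoints s hφsum hφsupp y i) = y := by
    intro i
    unfold sectionPoints
    split <;> exact hfs _ _
  refine Set.eq_singleton_iff_nonempty_unique_mem.mpr
    ⟨(Finset.coe_nonempty.mpr (FinProb.supp_nonempty _)).image f, ?_⟩
  rintro _ ⟨x, hx, rfl⟩
  obtain ⟨i, rfl⟩ := PreProb.supp_toFinProb_subset_range _ hx
  exact hpts i

theorem continuous_partitionSection (hUopen : ∀ i, IsOpen (U i)) (hs : ∀ i, Continuous (s i))
    (hφcont : ∀ i, Continuous (φ i)) :
    Continuous (partitionSection s hφnonneg hφsum hφsupp) := by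
  classical
  refine FinProb.continuous_of_locally_presented fun y₀ => ?_
  obtain ⟨i₀, hi₀⟩ := exists_mem_of_sum_eq_one hφsum hφsupp y₀
  have hW : ∀ᶠ y in 𝓝 y₀, ∀ i, (y₀ ∈ U i → y ∈ U i) ∧ (y₀ ∉ U i → φ i y = 0) := by
    refine Filter.eventually_all.mpr fun i => ?_
    by_cases hi : y₀ ∈ U i
    · filter_upwards [(hUopen i).mem_nhds hi] with y hy using ⟨fun _ => hy, (absurd hi ·)⟩
    · filter_upwards [notMem_tsupport_iff_eventuallyEq.mp fun h => hi (hφsupp i h)]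
        with y hy using ⟨(absurd · hi), fun _ => hy⟩
  set W := {y | ∀ i, (y₀ ∈ U i → y ∈ U i) ∧ (y₀ ∉ U i → φ i y = 0)}
  let pts (y : W) (i : Fin (n + 1)) : X :=
    if h : y₀ ∈ U i then s i ⟨y, (y.2 i).1 h⟩ else s i₀ ⟨y, (y.2 i₀).1 hi₀⟩
  have hpts : Continuous pts := by
    refine continuous_pi fun i => ?_
    unfold pts
    split <;> exact (hs _).comp (continuous_subtype_val.subtype_mk _)
  refine ⟨W, hW, fun y => ⟨n, pts y, partitionWeights hφnonneg hφsum y⟩,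
    continuous_sigmaMk.comp (hpts.prodMk
      ((continuous_partitionWeights hφcont hφnonneg hφsum).comp continuous_subtype_val)),
    fun y => PreProb.toFinProb_congr fun i hi => ?_⟩
  have hy₀ : y₀ ∈ U i := by_contra fun h => hi ((y.2 i).2 h)
  simp only [sectionPoints, pts, dif_pos hy₀, dif_pos ((y.2 i).1 hy₀)]

end PartitionOfUnity

theorem asecat_le_of_cover_and_partitionOfUnity_general {X : Type u} {Y : Type v}
    [TopologicalSpace X] [TopologicalSpace Y]
    (f : X → Y) (n : ℕ) (U : Fin (n + 1) → Set Y)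
    (hUopen : ∀ i, IsOpen (U i))
    (hsec : ∀ i, ∃ s : U i → X, Continuous s ∧ ∀ y : U i, f (s y) = (y : Y))
    (φ : Fin (n + 1) → Y → ℝ) (hφcont : ∀ i, Continuous (φ i))
    (hφnonneg : ∀ i y, 0 ≤ φ i y) (hφsum : ∀ y, ∑ i, φ i y = 1)
    (hφsupp : ∀ i, tsupport (φ i) ⊆ U i) :
    asecat f ≤ (n : ℕ∞) := by
  choose s hs hfs using hsec
  exact asecat_le_of_continuous
    (continuous_partitionSection s hφnonneg hφsum hφsupp hUopen hs hφcont)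
    (image_supp_partitionSection s hφnonneg hφsum hφsupp hfs)
    (card_supp_partitionSection_le s hφnonneg hφsum hφsupp)

/-- If `Y` has an open cover by `n + 1` sets over each of which `f` admits a continuous
section, and `Y` admits a partition of unity subordinate to this cover, then the analog
sectional category of `f` is at most `n`. -/
theorem asecat_le_of_cover_and_partitionOfUnity {X : Type u} {Y : Type v}
    [TopologicalSpace X] [TopologicalSpace Y] [T2Space X] [T2Space Y]
    [CompactlyGeneratedSpace X] [CompactlyGeneratedSpace Y]
    (f : X → Y) (n : ℕ) (U : Fin (n + 1) → Set Y)
    (hUopen : ∀ i, IsOpen (U i)) (hUcover : ⋃ i, U i = Set.univ)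
    (hsec : ∀ i, ∃ s : U i → X, Continuous s ∧ ∀ y : U i, f (s y) = (y : Y))
    (φ : Fin (n + 1) → Y → ℝ) (hφcont : ∀ i, Continuous (φ i))
    (hφnonneg : ∀ i y, 0 ≤ φ i y) (hφsum : ∀ y, ∑ i, φ i y = 1)
    (hφsupp : ∀ i, tsupport (φ i) ⊆ U i) :
    asecat f ≤ (n : ℕ∞) :=
  asecat_le_of_cover_and_partitionOfUnity_general f n U hUopen hsec φ hφcont hφnonneg hφsum hφsupp

end
end

section
/- Let $p:E\to X$ be a covering map of degree $k$ between convenient spaces. The assignment $\mu\mapsto \frac{1}{k}\sum_{x\in\mathrm{supp}(\mu)}\sum_{\tilde x\in p^{-1}(x)}\mu(x)\,\delta_{\tilde x}$ defines a continuous map $p^*:\mathcal{P}(X)\to\mathcal{P}(E)$ which is a section of $p_*:\mathcal{P}(E)\to\mathcal{P}(X)$, i.e. $p_*\circ p^*=\mathrm{id}_{\mathcal{P}(X)}$; moreover $p^*(\mathcal{P}_n(X))\subseteq\mathcal{P}_{kn}(E)$. -/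
open scoped unitInterval

noncomputable section

universe u v


/-- The pullback of measures along a degree-`k` covering map:
`μ ↦ (1/k) ∑_{x ∈ supp μ} ∑_{x̃ ∈ p⁻¹(x)} μ(x) δ_{x̃}`. -/
def coveringPullback {E : Type u} {X : Type v} [TopologicalSpace E] [TopologicalSpace X]
    (p : E → X) (k : ℕ) (hk : 0 < k) (hp : ∀ x, (p ⁻¹' {x}).encard = (k : ℕ∞))
    (μ : FinProb X) : FinProb E := by
  classical
  refine ⟨μ.1.sum fun x t => ∑ e ∈ (Set.finite_of_encard_eq_coe (hp x)).toFinset,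
      Finsupp.single e (t / k), ?_, ?_⟩
  · intro e
    rw [Finsupp.sum_apply]
    refine Finset.sum_nonneg fun x _ => ?_
    dsimp only
    rw [Finsupp.finset_sum_apply]
    refine Finset.sum_nonneg fun e' _ => ?_
    rw [Finsupp.single_apply]
    split
    · exact div_nonneg (μ.2.1 x) (Nat.cast_nonneg k)
    · exact le_refl 0
  · have h1 : ∀ (x : X) (t : ℝ),
        (∑ e ∈ (Set.finite_of_encard_eq_coe (hp x)).toFinset,
          Finsupp.single e (t / k)).sum (fun _ u => u) = t := by
      intro x t
      rw [← Finsupp.sum_finset_sum_index (fun _ => rfl) (fun _ _ _ => rfl)]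
      have hcard : ((Set.finite_of_encard_eq_coe (hp x)).toFinset.card : ℕ∞) = k := by
        rw [← Set.encard_coe_eq_coe_finsetCard, Set.Finite.coe_toFinset]
        exact hp x
      have hcard' : (Set.finite_of_encard_eq_coe (hp x)).toFinset.card = k := by
        exact_mod_cast hcard
      calc (∑ e ∈ (Set.finite_of_encard_eq_coe (hp x)).toFinset,
              (Finsupp.single e (t / k)).sum fun _ u => u)
          = ∑ _e ∈ (Set.finite_of_encard_eq_coe (hp x)).toFinset, t / k := by
            refine Finset.sum_congr rfl fun e _ => ?_
            rw [Finsupp.sum_single_index rfl]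
        _ = (Set.finite_of_encard_eq_coe (hp x)).toFinset.card • (t / k) :=
            Finset.sum_const _
        _ = t := by
            rw [hcard', nsmul_eq_mul, mul_div_assoc', mul_comm, mul_div_assoc,
              div_self (by exact_mod_cast hk.ne' : (k : ℝ) ≠ 0), mul_one]
    rw [Finsupp.sum_sum_index (fun _ => rfl) (fun _ _ _ => rfl)]
    calc μ.1.sum (fun x t =>
            (∑ e ∈ (Set.finite_of_encard_eq_coe (hp x)).toFinset,
              Finsupp.single e (t / k)).sum fun _ u => u)
        = μ.1.sum fun _ t => t := Finsupp.sum_congr fun x _ => h1 x (μ.1 x)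
      _ = 1 := μ.2.2

/-! Over a trivializing neighbourhood `U` of `x`, a covering of degree `k` has `k` continuous
sections `U → E` enumerating the fibres, namely `x' ↦ T.symm (x', j)` for a trivialization
`T` with fibre `Fin k`. Hence near a presentation `∑ tᵢ δ_{xᵢ}` the pullback is given by the
presentation `∑ (tᵢ / k) δ_{sᵢⱼ(xᵢ)}`, which depends continuously on `(x, t)`; as `𝒫(X)` carries
the quotient topology of the presentations, `p^*` is continuous. The other properties follow
from the weight formula `p^*μ(e) = μ(p e) / k`. -/

open Bundle Topology

namespace stdSimplex

variable {ι κ : Type*} [Fintype ι] [Fintype κ]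

def prod (s : stdSimplex ℝ ι) (t : stdSimplex ℝ κ) : stdSimplex ℝ (ι × κ) :=
  ⟨fun q => s q.1 * t q.2, fun q => mul_nonneg (zero_le s q.1) (zero_le t q.2), by
    rw [Fintype.sum_prod_type, ← Finset.sum_mul_sum, sum_eq_one, sum_eq_one, one_mul]⟩

@[simp]
lemma prod_apply (s : stdSimplex ℝ ι) (t : stdSimplex ℝ κ) (q : ι × κ) :
    prod s t q = s q.1 * t q.2 :=
  rfl

lemma continuous_prod_right (t : stdSimplex ℝ κ) :
    Continuous fun s : stdSimplex ℝ ι => prod s t :=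
  Continuous.subtype_mk (continuous_pi fun q : ι × κ =>
    ((continuous_apply q.1).comp continuous_subtype_val).mul continuous_const) _

end stdSimplex

namespace FinProb

variable {X : Type u} [TopologicalSpace X] {ι κ : Type*} [Fintype ι] [Fintype κ]

def ofSimplex (x : ι → X) (t : stdSimplex ℝ ι) : FinProb X := by
  classical
  exact ⟨∑ i, Finsupp.single (x i) (t i), fun y => by
    rw [Finsupp.finsetSum_apply]
    exact Finset.sum_nonneg fun i _ => by
      rw [Finsupp.single_apply]; split_ifs <;> simp, by
    rw [← Finsupp.sum_finsetSum_index (fun _ => rfl) (fun _ _ _ => rfl)]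
    simp [Finsupp.sum_single_index]⟩

lemma toFinProb_eq_ofSimplex {n : ℕ} (x : Fin (n + 1) → X) (t : stdSimplex ℝ (Fin (n + 1))) :
    PreProb.toFinProb ⟨n, (x, t)⟩ = ofSimplex x t := rfl

lemma weight_ofSimplex [DecidableEq X] (x : ι → X) (t : stdSimplex ℝ ι) (y : X) :
    (ofSimplex x t).weight y = ∑ i, if x i = y then t i else 0 := by
  simp only [weight, ofSimplex, Finsupp.finsetSum_apply, Finsupp.single_apply]

lemma ofSimplex_comp (y : κ → X) (f : ι → κ) (t : stdSimplex ℝ ι) :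
    ofSimplex (y ∘ f) t = ofSimplex y (stdSimplex.map f t) := by
  classical
  refine Subtype.ext ?_
  simp only [ofSimplex, stdSimplex.map_coe, FunOnFinite.linearMap_apply_apply,
    Finsupp.single_finsetSum]
  rw [← Finset.sum_fiberwise Finset.univ f]
  exact Finset.sum_congr rfl fun j _ => Finset.sum_congr rfl fun i hi => by
    rw [Function.comp_apply, (Finset.mem_filter.1 hi).2]

lemma continuous_ofSimplex :
    Continuous fun z : (ι → X) × stdSimplex ℝ ι => ofSimplex z.1 z.2 := by
  rcases isEmpty_or_nonempty ι with _ | _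
  · have : IsEmpty (stdSimplex ℝ ι) := ⟨fun t => by simpa using stdSimplex.sum_eq_one t⟩
    exact continuous_of_discreteTopology
  obtain ⟨m, hm⟩ := Nat.exists_eq_succ_of_ne_zero (Fintype.card_ne_zero (α := ι))
  let e : ι ≃ Fin (m + 1) := (Fintype.equivFin ι).trans (finCongr hm)
  have hpres : Continuous fun z : (Fin (m + 1) → X) × stdSimplex ℝ (Fin (m + 1)) =>
      PreProb.toFinProb ⟨m, z⟩ :=
    Continuous.comp (g := PreProb.toFinProb) continuous_coinduced_rng continuous_sigmaMk
  have h : ∀ z : (ι → X) × stdSimplex ℝ ι,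
      ofSimplex z.1 z.2 = PreProb.toFinProb ⟨m, (z.1 ∘ e.symm, stdSimplex.map e z.2)⟩ := by
    rintro ⟨x, t⟩
    rw [toFinProb_eq_ofSimplex, ← ofSimplex_comp, Function.comp_assoc, e.symm_comp_self,
      Function.comp_id]
  simp only [h]
  exact hpres.comp
    ((continuous_pi fun i => (continuous_apply (e.symm i)).comp continuous_fst).prodMk
      ((stdSimplex.continuous_map e).comp continuous_snd))

lemma continuous_iff {Y : Type*} [TopologicalSpace Y] {f : FinProb X → Y} :
    Continuous f ↔ ∀ n : ℕ,
      Continuous fun z : (Fin (n + 1) → X) × stdSimplex ℝ (Fin (n + 1)) => f (ofSimplex z.1 z.2) :=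
  continuous_coinduced_dom.trans continuous_sigma_iff

end FinProb

lemma card_toFinset_fiber {E : Type u} {X : Type v} (p : E → X) {k : ℕ}
    (hp : ∀ x, (p ⁻¹' {x}).encard = (k : ℕ∞)) (x : X) :
    (Set.finite_of_encard_eq_coe (hp x)).toFinset.card = k := by
  have h := hp x
  rw [← Set.Finite.coe_toFinset (Set.finite_of_encard_eq_coe h), Set.encard_coe_eq_coe_finsetCard]
    at h
  exact_mod_cast h

section CoveringPullback

variable {E : Type u} {X : Type v} [TopologicalSpace E] [TopologicalSpace X]
  (p : E → X) {k : ℕ} (hk : 0 < k) (hp : ∀ x, (p ⁻¹' {x}).encard = (k : ℕ∞))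

lemma val_coveringPullback (μ : FinProb X) :
    (coveringPullback p k hk hp μ).1 = ∑ x ∈ μ.supp,
      ∑ e ∈ (Set.finite_of_encard_eq_coe (hp x)).toFinset, Finsupp.single e (μ.weight x / k) :=
  rfl

lemma weight_coveringPullback (μ : FinProb X) (e : E) :
    (coveringPullback p k hk hp μ).weight e = μ.weight (p e) / k := by
  classical
  rw [FinProb.weight, val_coveringPullback]
  simp only [Finsupp.finsetSum_apply, Finsupp.single_apply, Finset.sum_ite_eq',
    Set.Finite.mem_toFinset, Set.mem_preimage, Set.mem_singleton_iff, Finset.sum_ite_eq]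
  split_ifs with h
  · rfl
  · rw [FinProb.weight, Finsupp.notMem_support_iff.mp h, zero_div]

lemma map_coveringPullback (μ : FinProb X) :
    FinProb.map p (coveringPullback p k hk hp μ) = μ := by
  have hfiber : ∀ x, Finsupp.mapDomain p
      (∑ e ∈ (Set.finite_of_encard_eq_coe (hp x)).toFinset, Finsupp.single e (μ.weight x / k)) =
      Finsupp.single x (μ.weight x) := fun x => by
    rw [Finsupp.mapDomain_finsetSum, Finset.sum_congr rfl fun e he => by
      rw [Finsupp.mapDomain_single, (Set.Finite.mem_toFinset _).mp he],
      Finset.sum_const, card_toFinset_fiber p hp, Finsupp.smul_single, nsmul_eq_mul,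
      mul_div_cancel₀ _ (by exact_mod_cast hk.ne')]
  refine Subtype.ext ?_
  change Finsupp.mapDomain p (coveringPullback p k hk hp μ).1 = μ.1
  rw [val_coveringPullback, Finsupp.mapDomain_finsetSum, Finset.sum_congr rfl fun x _ => hfiber x]
  exact Finsupp.sum_single μ.1

lemma supp_coveringPullback [DecidableEq E] (μ : FinProb X) :
    (coveringPullback p k hk hp μ).supp =
      μ.supp.biUnion fun x => (Set.finite_of_encard_eq_coe (hp x)).toFinset := by
  ext e
  have hk' : (k : ℝ) ≠ 0 := by exact_mod_cast hk.ne'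
  simp only [FinProb.supp, Finset.mem_biUnion, Finsupp.mem_support_iff, Set.Finite.mem_toFinset,
    Set.mem_preimage, Set.mem_singleton_iff]
  rw [← FinProb.weight, weight_coveringPullback, div_ne_zero_iff]
  simp [FinProb.weight, hk']

lemma card_supp_coveringPullback (μ : FinProb X) :
    (coveringPullback p k hk hp μ).supp.card = k * μ.supp.card := by
  classical
  rw [supp_coveringPullback, Finset.card_biUnion, Finset.sum_congr rfl fun x _ =>
    card_toFinset_fiber p hp x, Finset.sum_const, smul_eq_mul, mul_comm]
  intro x _ y _ hxy
  simp only [Function.onFun, Finset.disjoint_left, Set.Finite.mem_toFinset, Set.mem_preimage,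
    Set.mem_singleton_iff]
  rintro e rfl rfl
  exact hxy rfl

end CoveringPullback

lemma IsCoveringOfDegree.exists_trivialization {E : Type u} {X : Type v} [TopologicalSpace E]
    [TopologicalSpace X] {p : E → X} {k : ℕ} [NeZero k] (hcov : IsCoveringOfDegree p k) (x : X) :
    ∃ T : Trivialization (Fin k) p, x ∈ T.baseSet := by
  have : Finite (p ⁻¹' {x}) := (Set.finite_of_encard_eq_coe (hcov.2 x)).to_subtype
  have : DiscreteTopology (p ⁻¹' {x}) := (hcov.1 x).1
  have hcard : Nat.card (p ⁻¹' {x}) = k := by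
    rw [Nat.card_coe_set_eq, Set.ncard_def, hcov.2 x, ENat.toNat_natCast]
  have h := (hcov.1 x).of_fiber_homeomorph (Finite.equivFinOfCardEq hcard).toHomeomorphOfDiscrete
  exact ⟨h.toTrivialization', h.mem_toTrivialization_baseSet⟩

namespace Bundle.Trivialization

variable {Z B F : Type*} [TopologicalSpace Z] [TopologicalSpace B] [TopologicalSpace F]
  {proj : Z → B} (T : Trivialization F proj) {b : B}

lemma range_symm_mk (hb : b ∈ T.baseSet) :
    Set.range (fun f => T.toOpenPartialHomeomorph.symm (b, f)) = proj ⁻¹' {b} :=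
  ((T.preimageSingletonHomeomorph hb).symm.surjective.range_comp _).trans Subtype.range_coe

lemma injective_symm_mk (hb : b ∈ T.baseSet) :
    Function.Injective (fun f => T.toOpenPartialHomeomorph.symm (b, f)) :=
  Subtype.val_injective.comp (T.preimageSingletonHomeomorph hb).symm.injective

end Bundle.Trivialization

lemma sum_ite_eq_of_range_eq_fiber {E X κ : Type*} [Fintype κ] [DecidableEq E] [DecidableEq X]
    {p : E → X} {x : X} {f : κ → E} (hf : Function.Injective f) (hrange : Set.range f = p ⁻¹' {x})
    (e : E) (c : ℝ) :
    (∑ j, if f j = e then c else 0) = if x = p e then c else 0 := by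
  by_cases h : x = p e
  · obtain ⟨j₀, rfl⟩ : e ∈ Set.range f := hrange ▸ h.symm
    rw [if_pos h, Finset.sum_eq_single j₀ (fun j _ hj => if_neg (hf.ne hj)) (by simp),
      if_pos rfl]
  · rw [if_neg h]
    refine Finset.sum_eq_zero fun j _ => if_neg ?_
    rintro rfl
    exact h (hrange.subset ⟨j, rfl⟩).symm

lemma coveringPullback_ofSimplex {E : Type u} {X : Type v} [TopologicalSpace E]
    [TopologicalSpace X] (p : E → X) (k : ℕ) [NeZero k]
    (hp : ∀ x, (p ⁻¹' {x}).encard = (k : ℕ∞)) {ι : Type*} [Fintype ι] (x : ι → X)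
    (t : stdSimplex ℝ ι) (s : ι → Fin k → E) (hinj : ∀ i, Function.Injective (s i))
    (hrange : ∀ i, Set.range (s i) = p ⁻¹' {x i}) :
    coveringPullback p k (Nat.pos_of_neZero k) hp (FinProb.ofSimplex x t) =
      FinProb.ofSimplex (fun q : ι × Fin k => s q.1 q.2)
        (stdSimplex.prod t stdSimplex.barycenter) := by
  classical
  refine Subtype.ext (Finsupp.ext fun e => ?_)
  change (coveringPullback p k _ hp _).weight e = (FinProb.ofSimplex _ _).weight e
  rw [weight_coveringPullback, FinProb.weight_ofSimplex, FinProb.weight_ofSimplex,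
    Fintype.sum_prod_type, Finset.sum_div]
  refine Finset.sum_congr rfl fun i _ => ?_
  have hbarycenter : ∀ j : Fin k, (stdSimplex.barycenter j : ℝ) = (k : ℝ)⁻¹ := fun j =>
    (stdSimplex.barycenter_apply j).trans (by rw [Fintype.card_fin])
  simp only [stdSimplex.prod_apply, hbarycenter, ← div_eq_mul_inv]
  rw [sum_ite_eq_of_range_eq_fiber (hinj i) (hrange i), ite_div, zero_div]

theorem continuous_coveringPullback {E : Type u} {X : Type v} [TopologicalSpace E]
    [TopologicalSpace X] {p : E → X} {k : ℕ} (hk : 0 < k) (hcov : IsCoveringOfDegree p k) :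
    Continuous (coveringPullback p k hk hcov.2) := by
  have : NeZero k := ⟨hk.ne'⟩
  refine FinProb.continuous_iff.2 fun n => continuous_iff_continuousAt.2 fun z₀ => ?_
  choose T hT using fun i => hcov.exists_trivialization (z₀.1 i)
  let lift : (Fin (n + 1) → X) → Fin (n + 1) × Fin k → E :=
    fun x q => (T q.1).toOpenPartialHomeomorph.symm (x q.1, q.2)
  have hlift : ContinuousAt lift z₀.1 := continuousAt_pi.2 fun q =>
    ((T q.1).continuousAt_symm_prodMk_left (hT q.1)).comp
      (f := fun x : Fin (n + 1) → X => x q.1) (continuous_apply q.1).continuousAt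
  have hbase : ∀ᶠ z in 𝓝 z₀, ∀ i, z.1 i ∈ (T i).baseSet := Filter.eventually_all.2 fun i =>
    ((continuous_apply i).comp continuous_fst).continuousAt.preimage_mem_nhds
      ((T i).open_baseSet.mem_nhds (hT i))
  have hlocal : ∀ᶠ z in 𝓝 z₀,
      FinProb.ofSimplex (lift z.1) (stdSimplex.prod z.2 stdSimplex.barycenter) =
        coveringPullback p k hk hcov.2 (FinProb.ofSimplex z.1 z.2) := by
    filter_upwards [hbase] with z hz
    exact (coveringPullback_ofSimplex p k hcov.2 z.1 z.2 _
      (fun i => (T i).injective_symm_mk (hz i)) fun i => (T i).range_symm_mk (hz i)).symm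
  refine ContinuousAt.congr ?_ hlocal
  exact FinProb.continuous_ofSimplex.continuousAt.comp
    ((hlift.comp continuousAt_fst).prodMk
      ((stdSimplex.continuous_prod_right _).comp continuous_snd).continuousAt)

theorem coveringPullback_continuous_section_general {E X : Type u}
    [TopologicalSpace E] [TopologicalSpace X]
    (p : E → X) (k : ℕ) (hk : 0 < k) (hcov : IsCoveringOfDegree p k) :
    (∀ (μ : FinProb X) (e : E),
        (coveringPullback p k hk hcov.2 μ).weight e = μ.weight (p e) / k) ∧
    Continuous (coveringPullback p k hk hcov.2) ∧
    (∀ μ : FinProb X, FinProb.map p (coveringPullback p k hk hcov.2 μ) = μ) ∧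
    (∀ (n : ℕ) (μ : FinProb X), μ ∈ FinProbLe X n →
        coveringPullback p k hk hcov.2 μ ∈ FinProbLe E (k * n)) :=
  ⟨weight_coveringPullback p hk hcov.2, continuous_coveringPullback hk hcov,
    map_coveringPullback p hk hcov.2, fun _ μ hμ =>
      (card_supp_coveringPullback p hk hcov.2 μ).trans_le (Nat.mul_le_mul_left k hμ)⟩

/-- For a degree-`k` covering map `p : E → X`, the assignment
`μ ↦ (1/k) ∑_{x ∈ supp μ} ∑_{x̃ ∈ p⁻¹(x)} μ(x) δ_{x̃}` defines a continuous map
`p^* : 𝒫(X) → 𝒫(E)` which is a section of `p_*`, and `p^*(𝒫ₙ(X)) ⊆ 𝒫_{kn}(E)`. -/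
theorem coveringPullback_continuous_section {E X : Type u}
    [TopologicalSpace E] [TopologicalSpace X] [T2Space E] [T2Space X]
    [CompactlyGeneratedSpace E] [CompactlyGeneratedSpace X]
    (p : E → X) (k : ℕ) (hk : 0 < k) (hcov : IsCoveringOfDegree p k) :
    (∀ (μ : FinProb X) (e : E),
        (coveringPullback p k hk hcov.2 μ).weight e = μ.weight (p e) / k) ∧
    Continuous (coveringPullback p k hk hcov.2) ∧
    (∀ μ : FinProb X, FinProb.map p (coveringPullback p k hk hcov.2 μ) = μ) ∧
    (∀ (n : ℕ) (μ : FinProb X), μ ∈ FinProbLe X n →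
        coveringPullback p k hk hcov.2 μ ∈ FinProbLe E (k * n)) :=
  coveringPullback_continuous_section_general p k hk hcov

end
end
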